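/- In a rooted 0/1-edge-labeled tree with discrete ~0, there are no three distinct leaves x, y, z with x ⇀1 y and z ⇀1 y. -/

import Mathlib

/-!
Both least common ancestors `u` of `x, y` and `v` of `z, y` lie on the path from `y` to the
root, so one of them, say `v`, lies on the path from `y` to the other. The paths `u → y` and
`v → y` each carry exactly one edge labeled `1`, and the second is a final segment of the
first, so the segment between `u` and `v` is labeled `0` throughout. Concatenating
`x ~0 u ~0 v ~0 z` gives `x ~0 z`, and discreteness of `~0` forces `x = z`.
-/

open SimpleGraph

/-- A leaf of a graph: a vertex with exactly one neighbor. -/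
def TIsLeaf {V : Type*} (T : SimpleGraph V) (x : V) : Prop := ∃! y, T.Adj x y

/-- `Rel0 T ℓ x y`: every edge on the (unique) path from `x` to `y` is labeled `0`. -/
def Rel0 {V : Type*} (T : SimpleGraph V) (ℓ : Sym2 V → Bool) (x y : V) : Prop :=
  ∃ p : T.Walk x y, p.IsPath ∧ ∀ e ∈ p.edges, ℓ e = false

/-- `Rel1 T ℓ x y`: exactly one edge on the (unique) path from `x` to `y` is labeled
`1` and all others `0`. -/
def Rel1 {V : Type*} (T : SimpleGraph V) (ℓ : Sym2 V → Bool) (x y : V) : Prop :=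
  ∃ p : T.Walk x y, p.IsPath ∧ (p.edges.filter ℓ).length = 1

/-- `u` is the least common ancestor of `x` and `y` in the tree `T` rooted at `ρ`. -/
def IsLca {V : Type*} (T : SimpleGraph V) (ρ x y u : V) : Prop :=
  ∀ (p : T.Walk x y) (q : T.Walk x ρ) (r : T.Walk y ρ),
    p.IsPath → q.IsPath → r.IsPath →
    u ∈ p.support ∧ u ∈ q.support ∧ u ∈ r.support

/-- The antisymmetric single-1-relation `x ⇀1 y`. -/
def DRel1 {V : Type*} (T : SimpleGraph V) (ρ : V) (ℓ : Sym2 V → Bool)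
    (x y : V) : Prop :=
  ∃ u : V, IsLca T ρ x y u ∧ Rel0 T ℓ u x ∧ Rel1 T ℓ u y

namespace SimpleGraph.Walk

variable {V : Type*} {G : SimpleGraph V} [DecidableEq V]

lemma mem_support_takeUntil_or {a b u v : V} (r : G.Walk a b) (hu : u ∈ r.support)
    (hv : v ∈ r.support) :
    v ∈ (r.takeUntil u hu).support ∨ u ∈ (r.takeUntil v hv).support := by
  rcases List.prefix_or_prefix_of_prefix (r.support_takeUntil_prefix_support hu)
      (r.support_takeUntil_prefix_support hv) with h | h
  · exact Or.inr (h.subset (end_mem_support _))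
  · exact Or.inl (h.subset (end_mem_support _))

end SimpleGraph.Walk

section Labels

variable {V : Type*} {T : SimpleGraph V} {ℓ : Sym2 V → Bool} {a b c : V}

lemma Rel0.of_walk (w : T.Walk a b) (hw : ∀ e ∈ w.edges, ℓ e = false) : Rel0 T ℓ a b := by
  classical
  exact ⟨w.bypass, w.bypass_isPath, fun e he => hw e (w.edges_bypass_subset_edges he)⟩

lemma Rel0.symm (h : Rel0 T ℓ a b) : Rel0 T ℓ b a := by
  obtain ⟨p, -, hp⟩ := h
  exact .of_walk p.reverse (by simpa only [Walk.edges_reverse, List.mem_reverse] using hp)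

lemma Rel0.trans (hab : Rel0 T ℓ a b) (hbc : Rel0 T ℓ b c) : Rel0 T ℓ a c := by
  obtain ⟨p, -, hp⟩ := hab
  obtain ⟨q, -, hq⟩ := hbc
  refine .of_walk (p.append q) fun e he => ?_
  rw [Walk.edges_append, List.mem_append] at he
  exact he.elim (hp e) (hq e)

lemma Rel1.symm (h : Rel1 T ℓ a b) : Rel1 T ℓ b a := by
  obtain ⟨p, hp, hp1⟩ := h
  refine ⟨p.reverse, hp.reverse, ?_⟩
  rwa [Walk.edges_reverse, List.filter_reverse, List.length_reverse]

lemma Rel1.filter_length_eq_one (hT : T.IsTree) (h : Rel1 T ℓ a b) {p : T.Walk a b}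
    (hp : p.IsPath) : (p.edges.filter ℓ).length = 1 := by
  obtain ⟨q, hq, hq1⟩ := h
  rwa [(hT.existsUnique_path a b).unique hp hq]

lemma rel0_of_rel1_of_mem_support (hT : T.IsTree) {y u v : V} {s : T.Walk y u}
    (hs : s.IsPath) (hv : v ∈ s.support) (h1u : Rel1 T ℓ u y) (h1v : Rel1 T ℓ v y) :
    Rel0 T ℓ v u := by
  classical
  refine ⟨s.dropUntil v hv, hs.dropUntil hv, ?_⟩
  have hsplit := congrArg (fun w : T.Walk y u => (w.edges.filter ℓ).length) (s.take_spec hv)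
  simp only [Walk.edges_append, List.filter_append, List.length_append,
    h1u.symm.filter_length_eq_one hT hs,
    h1v.symm.filter_length_eq_one hT (hs.takeUntil hv)] at hsplit
  have hnil : (s.dropUntil v hv).edges.filter ℓ = [] := List.length_eq_zero_iff.1 (by omega)
  simpa using List.filter_eq_nil_iff.1 hnil

end Labels

lemma IsLca.mem_support {V : Type*} {T : SimpleGraph V} (hT : T.IsTree) {ρ x y u : V}
    (h : IsLca T ρ x y u) {r : T.Walk y ρ} (hr : r.IsPath) : u ∈ r.support := by
  obtain ⟨p, hp, -⟩ := hT.existsUnique_path x y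
  obtain ⟨q, hq, -⟩ := hT.existsUnique_path x ρ
  exact (h p q r hp hq hr).2.2

/-- In a rooted 0/1-edge-labeled tree with discrete `~0`, there are no three distinct
leaves `x`, `y`, `z` with `x ⇀1 y` and `z ⇀1 y`. -/
theorem no_common_head {V : Type*} (T : SimpleGraph V) (hT : T.IsTree) (ρ : V)
    (ℓ : Sym2 V → Bool)
    (hdisc : ∀ a b : V, TIsLeaf T a → TIsLeaf T b → Rel0 T ℓ a b → a = b) :
    ¬ ∃ x y z : V, TIsLeaf T x ∧ TIsLeaf T y ∧ TIsLeaf T z ∧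
      x ≠ y ∧ x ≠ z ∧ y ≠ z ∧ DRel1 T ρ ℓ x y ∧ DRel1 T ρ ℓ z y := by
  classical
  rintro ⟨x, y, z, hx, -, hz, -, hxz, -, ⟨u, hLu, h0x, h1u⟩, ⟨v, hLv, h0z, h1v⟩⟩
  obtain ⟨r, hr, -⟩ := hT.existsUnique_path y ρ
  have hur := hLu.mem_support hT hr
  have hvr := hLv.mem_support hT hr
  rcases r.mem_support_takeUntil_or hur hvr with hv | hu
  · have hvu := rel0_of_rel1_of_mem_support hT (hr.takeUntil hur) hv h1u h1v
    exact hxz (hdisc x z hx hz (h0x.symm.trans (hvu.symm.trans h0z)))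
  · have huv := rel0_of_rel1_of_mem_support hT (hr.takeUntil hvr) hu h1v h1u
    exact hxz (hdisc x z hx hz (h0x.symm.trans (huv.trans h0z)))
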